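/- Let S be a string of length n and let (X,Y) be a 2-cover of S with X = S[1..p] a prefix of S and Y = S[s..n] a suffix of S. Define X_trim = X if X is not highly periodic, and X_trim = X[1..2ρ + (p mod ρ)] where ρ = per(X) if X is highly ρ-periodic; define Y_trim = Y if Y is not highly periodic, and Y_trim = Y[|Y| − 2ρ' − (|Y| mod ρ') + 1..|Y|] where ρ' = per(Y) if Y is highly ρ'-periodic. Then (X_trim, Y_trim) is a 2-cover of S, and neither X_trim nor Y_trim is highly periodic. -/

import Mathlib

variable {α : Type*}

/-- `sub S i j` is the substring `S[i..j]` (1-indexed, inclusive endpoints). -/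
def sub (S : List α) (i j : ℕ) : List α := (S.take j).drop (i - 1)

/-- `ρ` is a period of `T`: `1 ≤ ρ` and `T[i] = T[i+ρ]` for all valid `i`. -/
def IsPeriod (T : List α) (ρ : ℕ) : Prop :=
  1 ≤ ρ ∧ ∀ i : ℕ, i + ρ < T.length → T[i]? = T[i + ρ]?

/-- The minimal period of `T`. -/
noncomputable def per (T : List α) : ℕ := sInf {ρ : ℕ | IsPeriod T ρ}

/-- The substring `X` covers index `i` of `S`. -/
def Covers (S X : List α) (i : ℕ) : Prop :=
  ∃ j₁ j₂ : ℕ, 1 ≤ j₁ ∧ j₁ ≤ i ∧ i ≤ j₂ ∧ j₂ ≤ S.length ∧ sub S j₁ j₂ = X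

/-- `(X, Y)` is a 2-cover of `S`: every index of `S` is covered by `X` or `Y`. -/
def TwoCover (S X Y : List α) : Prop :=
  ∀ i : ℕ, 1 ≤ i → i ≤ S.length → Covers S X i ∨ Covers S Y i

/-- `T` is highly periodic: `|T| ≥ 3·per T`. -/
def HighlyPeriodic (T : List α) : Prop := 3 * per T ≤ T.length

noncomputable instance (T : List α) : Decidable (HighlyPeriodic T) :=
  inferInstanceAs (Decidable (3 * per T ≤ T.length))

/-!
Let `T` be highly `ρ`-periodic and `L = 2ρ + (|T| mod ρ)`, so that `ρ ≤ L < 3ρ` and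
`|T| - L` is a multiple of `ρ`. By periodicity, the window of length `L` of `T` at any offset
`kρ` with `kρ + L ≤ |T|` reads `T[1..L]`; these windows cover all of `T` because `L ≥ ρ`, so the
prefix `T[1..L]` covers every index of `S` that `T` covers, and it equals the suffix of `T`
of length `L`. It is not highly periodic: a period `q` of it with `3q ≤ L` satisfies
`ρ + q ≤ L`, hence extends along `ρ` to a period of all of `T`, and `q < ρ = per T`.
-/

namespace IsPeriod

variable {T : List α} {ρ : ℕ}

lemma length_add_one (T : List α) : IsPeriod T (T.length + 1) :=
  ⟨by omega, fun _ h => by omega⟩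

lemma getElem?_add_mul (h : IsPeriod T ρ) :
    ∀ k i : ℕ, i + k * ρ < T.length → T[i]? = T[i + k * ρ]?
  | 0, i, _ => by simp
  | k + 1, i, hi => by
    rw [h.getElem?_add_mul k i (by nlinarith), h.2 (i + k * ρ) (by nlinarith)]
    congr 1
    ring

lemma take_drop_mul (h : IsPeriod T ρ) {k L : ℕ} (hkL : k * ρ + L ≤ T.length) :
    (T.drop (k * ρ)).take L = T.take L := by
  refine List.ext_getElem? fun t => ?_
  rw [List.getElem?_take, List.getElem?_take]
  split_ifs with ht
  · rw [List.getElem?_drop, h.getElem?_add_mul k t (by omega), add_comm]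
  · rfl

lemma drop_mul_eq_take (h : IsPeriod T ρ) {m L : ℕ} (hmL : m * ρ + L = T.length) :
    T.drop (m * ρ) = T.take L := by
  rw [← h.take_drop_mul hmL.le, List.take_of_length_le (by simp; omega)]

lemma of_take (hρ : IsPeriod T ρ) {q L : ℕ} (hq : IsPeriod (T.take L) q) (hL : ρ + q ≤ L) :
    IsPeriod T q := by
  refine ⟨hq.1, fun i => ?_⟩
  induction i using Nat.strong_induction_on with
  | _ i ih =>
    intro hi
    have hρ1 := hρ.1
    by_cases hiL : i + q < L
    · have := hq.2 i (by simp; omega)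
      rwa [List.getElem?_take, List.getElem?_take, if_pos (by omega), if_pos hiL] at this
    · -- past the prefix, step back by `ρ`, use `q` there, and step forward again
      obtain ⟨j, rfl⟩ : ∃ j, i = j + ρ := ⟨i - ρ, by omega⟩
      calc T[j + ρ]? = T[j]? := (hρ.2 j (by omega)).symm
        _ = T[j + q]? := ih j (by omega) (by omega)
        _ = T[j + q + ρ]? := hρ.2 (j + q) (by omega)
        _ = T[j + ρ + q]? := by rw [add_right_comm]

end IsPeriod

lemma isPeriod_per (T : List α) : IsPeriod T (per T) :=
  Nat.sInf_mem (s := {ρ | IsPeriod T ρ}) ⟨T.length + 1, IsPeriod.length_add_one T⟩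

lemma per_le_of_isPeriod {T : List α} {q : ℕ} (h : IsPeriod T q) : per T ≤ q :=
  Nat.sInf_le h

lemma one_le_per (T : List α) : 1 ≤ per T :=
  (isPeriod_per T).1

lemma not_highlyPeriodic_take {T : List α} {L : ℕ} (hL : L ≤ T.length)
    (h2 : 2 * per T ≤ L) (h3 : L < 3 * per T) : ¬ HighlyPeriodic (T.take L) := by
  intro hT
  have hlen : (T.take L).length = L := by simp; omega
  rw [HighlyPeriodic, hlen] at hT
  have := per_le_of_isPeriod ((isPeriod_per T).of_take (isPeriod_per (T.take L)) (by omega))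
  omega

lemma exists_mul_le_lt_mul_add {ρ L m d : ℕ} (hρ : 0 < ρ) (hL : ρ ≤ L) (hd : d < m * ρ + L) :
    ∃ k ≤ m, k * ρ ≤ d ∧ d < k * ρ + L := by
  by_cases hdm : d / ρ ≤ m
  · refine ⟨d / ρ, hdm, Nat.div_mul_le_self d ρ, ?_⟩
    have := Nat.div_add_mod' d ρ
    have := Nat.mod_lt d hρ
    omega
  · refine ⟨m, le_rfl, ?_, hd⟩
    have := Nat.div_mul_le_self d ρ
    have : (m + 1) * ρ ≤ d / ρ * ρ := Nat.mul_le_mul_right ρ (by omega)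
    nlinarith

lemma sub_add_eq_take_drop_sub {S : List α} {j₁ j₂ a b : ℕ} (hj₁ : 1 ≤ j₁)
    (hab : j₁ + a + b ≤ j₂ + 1) :
    sub S (j₁ + a) (j₁ + a + b - 1) = ((sub S j₁ j₂).drop a).take b := by
  simp only [sub, List.drop_drop, List.take_drop, List.take_take]
  congr 2 <;> omega

lemma Covers.take_of_isPeriod {S T : List α} {i ρ L m : ℕ} (hc : Covers S T i)
    (hρ : IsPeriod T ρ) (hL : ρ ≤ L) (hmL : m * ρ + L = T.length) :
    Covers S (T.take L) i := by
  obtain ⟨j₁, j₂, hj₁, hj₁i, hij₂, hj₂S, rfl⟩ := hc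
  have hlen : (sub S j₁ j₂).length = j₂ + 1 - j₁ := by simp [sub]; omega
  obtain ⟨k, hkm, hki, hik⟩ :=
    exists_mul_le_lt_mul_add (m := m) (d := i - j₁) hρ.1 hL (by omega)
  have hkL : k * ρ + L ≤ (sub S j₁ j₂).length :=
    hmL ▸ Nat.add_le_add_right (Nat.mul_le_mul_right ρ hkm) L
  refine ⟨j₁ + k * ρ, j₁ + k * ρ + L - 1, by omega, by omega, by omega, by omega, ?_⟩
  rw [sub_add_eq_take_drop_sub (j₂ := j₂) (b := L) hj₁ (by omega), hρ.take_drop_mul hkL]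

namespace HighlyPeriodic

variable {T : List α}

lemma div_sub_two_mul_per_add (h : HighlyPeriodic T) :
    (T.length / per T - 2) * per T + (2 * per T + T.length % per T) = T.length := by
  have h3 : 3 ≤ T.length / per T :=
    (Nat.le_div_iff_mul_le (one_le_per T)).2 (by rw [HighlyPeriodic] at h; omega)
  have := Nat.div_add_mod' T.length (per T)
  have : 2 * per T ≤ T.length / per T * per T := by nlinarith
  rw [Nat.sub_mul]
  omega

lemma not_highlyPeriodic_take_trim (h : HighlyPeriodic T) :
    ¬ HighlyPeriodic (T.take (2 * per T + T.length % per T)) :=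
  not_highlyPeriodic_take (by have := h.div_sub_two_mul_per_add; omega) (by omega)
    (by have := Nat.mod_lt T.length (one_le_per T); omega)

lemma drop_trim_eq_take_trim (h : HighlyPeriodic T) :
    T.drop (T.length - (2 * per T + T.length % per T)) =
      T.take (2 * per T + T.length % per T) := by
  have := h.div_sub_two_mul_per_add
  rw [show T.length - _ = (T.length / per T - 2) * per T by omega]
  exact (isPeriod_per T).drop_mul_eq_take this

lemma covers_take_trim (h : HighlyPeriodic T) {S : List α} {i : ℕ} (hc : Covers S T i) :
    Covers S (T.take (2 * per T + T.length % per T)) i :=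
  hc.take_of_isPeriod (isPeriod_per T) (by omega) h.div_sub_two_mul_per_add

end HighlyPeriodic

theorem stmt17_general (S : List α) (X Y Xt Yt : List α) (hcov : TwoCover S X Y)
    (hXt : Xt = if HighlyPeriodic X
      then X.take (2 * per X + X.length % per X) else X)
    (hYt : Yt = if HighlyPeriodic Y
      then Y.drop (Y.length - (2 * per Y + Y.length % per Y)) else Y) :
    TwoCover S Xt Yt ∧ ¬ HighlyPeriodic Xt ∧ ¬ HighlyPeriodic Yt := by
  have hX : (∀ i, Covers S X i → Covers S Xt i) ∧ ¬ HighlyPeriodic Xt := by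
    split_ifs at hXt with h <;> subst hXt
    exacts [⟨fun _ => h.covers_take_trim, h.not_highlyPeriodic_take_trim⟩, ⟨fun _ => id, h⟩]
  have hY : (∀ i, Covers S Y i → Covers S Yt i) ∧ ¬ HighlyPeriodic Yt := by
    split_ifs at hYt with h <;> subst hYt
    · rw [h.drop_trim_eq_take_trim]
      exact ⟨fun _ => h.covers_take_trim, h.not_highlyPeriodic_take_trim⟩
    · exact ⟨fun _ => id, h⟩
  exact ⟨fun i h1 h2 => (hcov i h1 h2).imp (hX.1 i) (hY.1 i), hX.2, hY.2⟩

/-- Trimming a prefix-suffix 2-cover: if `(X,Y)` is a 2-cover of `S` with `X`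
a prefix and `Y` a suffix, replacing a highly `ρ`-periodic `X` by its prefix
of length `2ρ + (|X| mod ρ)` and a highly `ρ'`-periodic `Y` by its suffix of
length `2ρ' + (|Y| mod ρ')` yields a 2-cover whose parts are not highly
periodic. -/
theorem stmt17 (S : List α) (n p s : ℕ) (hn : S.length = n)
    (hp1 : 1 ≤ p) (hpn : p ≤ n) (hs1 : 1 ≤ s) (hsn : s ≤ n)
    (X Y Xt Yt : List α) (hX : X = S.take p) (hY : Y = S.drop (s - 1))
    (hcov : TwoCover S X Y)
    (hXt : Xt = if HighlyPeriodic X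
      then X.take (2 * per X + X.length % per X) else X)
    (hYt : Yt = if HighlyPeriodic Y
      then Y.drop (Y.length - (2 * per Y + Y.length % per Y)) else Y) :
    TwoCover S Xt Yt ∧ ¬ HighlyPeriodic Xt ∧ ¬ HighlyPeriodic Yt :=
  stmt17_general S X Y Xt Yt hcov hXt hYt
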